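/- In the layered DVD gadget with a dictatorship f(x) = x_s, define B_j = {b^ℓ_x : x_s = j} and T_j = {t^ℓ_{x,S} : s ∉ S, x_s = j}. Then for every j ∈ [k], the subgraph induced by all bit-vertices together with the good test-vertices (T_0 ∪ ... ∪ T_{k−1}) \ T_j contains no directed path passing through k test-vertices. -/

import Mathlib

open Finset

/-- The sub-cube `C_{x,S} = {z : z_a = x_a for all a not appearing in S}`. -/
def Cube (k R m : ℕ) (x : Fin R → Fin k) (S : Fin m → Fin R) : Set (Fin R → Fin k) :=
  {z | ∀ a : Fin R, (∀ i, S i ≠ a) → z a = x a}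

/-- `z ⊕ 1`: add `1 (mod k)` to every coordinate. -/
def shiftPt (k R : ℕ) [NeZero k] (z : Fin R → Fin k) : Fin R → Fin k := fun a => z a + 1

/-- Layered bit-vertices `b^ℓ_x`, layers `ℓ = 0,…,L`. -/
abbrev LBitV (k R L : ℕ) := Fin (L + 1) × (Fin R → Fin k)

/-- Layered test-vertices `t^ℓ_{x,S}`, layers `ℓ = 0,…,L-1`. -/
abbrev LTestV (k R m L : ℕ) := Fin L × ((Fin R → Fin k) × (Fin m → Fin R))

/-- Vertices of the layered DVD gadget. -/
abbrev LGadV (k R m L : ℕ) := LBitV k R L ⊕ LTestV k R m L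

/-- Arcs of the layered DVD gadget. -/
def lgadAdj (k R m L : ℕ) [NeZero k] : LGadV k R m L → LGadV k R m L → Prop
  | Sum.inl b, Sum.inr t => (b.1 : ℕ) ≤ (t.1 : ℕ) ∧ b.2 ∈ Cube k R m t.2.1 t.2.2
  | Sum.inr t, Sum.inl b => (t.1 : ℕ) < (b.1 : ℕ) ∧ b.2 ∈ shiftPt k R '' Cube k R m t.2.1 t.2.2
  | _, _ => False

/-- Kept vertices: all bit-vertices, and test-vertices `t^ℓ_{x,S}` with `s ∉ S` and
`x_s ≠ j` (the good test-vertices outside `T_j`). -/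
def lgadKeep (k R m L : ℕ) (s : Fin R) (j : Fin k) : LGadV k R m L → Prop
  | Sum.inl _ => True
  | Sum.inr t => (∀ i, t.2.2 i ≠ s) ∧ t.2.1 s ≠ j

/-!
Label every vertex by its `s`-th coordinate: `x_s` for a test-vertex `t^ℓ_{x,S}` and `y_s` for a
bit-vertex `b^ℓ_y`. Since `s ∉ S`, an arc into a test-vertex keeps the label and an arc out of it
adds `1 (mod k)`, so along a path the label advances by one exactly at the test-vertices. None of
the kept test-vertices has label `j`, so starting from a vertex of label `c` the path passes
through at most `(j - c) mod k < k` test-vertices before it would have to reach label `j`.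
-/

section LabelledChain

variable {α : Type*} {k : ℕ} [NeZero k] {r : α → α → Prop} {K : α → Prop} {P : α → Bool}
  {c : α → Fin k} {j : Fin k}

theorem countP_cons_le_val_sub_of_isChain
    (hstep : ∀ u w, K u → K w → r u w → c w = c u + if P u then 1 else 0)
    (havoid : ∀ u, K u → P u → c u ≠ j) (v : α) (p : List α) (hchain : (v :: p).IsChain r)
    (hK : ∀ u ∈ v :: p, K u) : (v :: p).countP P ≤ (j - c v).val := by
  have hdist : ∀ v, K v → (if P v then 1 else 0) + (j - (c v + if P v then 1 else 0)).val
      = (j - c v).val := by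
    intro v hv
    by_cases hP : P v
    · have hne : j - c v ≠ 0 := sub_ne_zero.2 (havoid v hv hP).symm
      have hpos : 0 < (j - c v).val := Fin.pos_iff_ne_zero.2 hne
      simp only [hP, if_true, ← sub_sub, Fin.val_sub_one_of_ne_zero hne]
      omega
    · simp [hP]
  induction p generalizing v with
  | nil =>
    have := hdist v (hK v List.mem_cons_self)
    simp only [List.countP_singleton]
    omega
  | cons w p ih =>
    obtain ⟨hvw, hchain⟩ := List.isChain_cons_cons.1 hchain
    have hKv := hK v List.mem_cons_self
    have hKw := hK w (List.mem_cons_of_mem _ List.mem_cons_self)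
    have hw := ih w hchain fun u hu => hK u (List.mem_cons_of_mem _ hu)
    rw [hstep v w hKv hKw hvw] at hw
    have := hdist v hKv
    rw [List.countP_cons]
    omega

theorem countP_lt_of_isChain
    (hstep : ∀ u w, K u → K w → r u w → c w = c u + if P u then 1 else 0)
    (havoid : ∀ u, K u → P u → c u ≠ j) :
    ∀ p : List α, p.IsChain r → (∀ u ∈ p, K u) → p.countP P < k
  | [], _, _ => Nat.pos_of_neZero k
  | v :: p, hchain, hK =>
    (countP_cons_le_val_sub_of_isChain hstep havoid v p hchain hK).trans_lt (j - c v).isLt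

end LabelledChain

section Gadget

variable {k R m L : ℕ}

def lgadLabel (s : Fin R) : LGadV k R m L → Fin k :=
  Sum.elim (fun b => b.2 s) (fun t => t.2.1 s)

theorem lgadLabel_of_lgadAdj [NeZero k] {s : Fin R} {j : Fin k} (u w : LGadV k R m L)
    (hu : lgadKeep k R m L s j u) (hw : lgadKeep k R m L s j w) (huw : lgadAdj k R m L u w) :
    lgadLabel s w = lgadLabel s u + if u.isRight then 1 else 0 := by
  rcases u with b | t <;> rcases w with b' | t'
  · exact huw.elim
  · simpa [lgadLabel] using (huw.2 s hw.1).symm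
  · obtain ⟨_, z, hz, hzb⟩ := huw
    simp [lgadLabel, ← hzb, shiftPt, hz s hu.1]
  · exact huw.elim

theorem lgadLabel_ne_of_isRight {s : Fin R} {j : Fin k} (u : LGadV k R m L)
    (hu : lgadKeep k R m L s j u) (hright : u.isRight) : lgadLabel s u ≠ j := by
  rcases u with b | t
  · simp at hright
  · exact hu.2

end Gadget

/-- In the layered DVD gadget with dictator coordinate `s`, for every `j ∈ [k]`, the
subgraph induced by all bit-vertices and the good test-vertices `(T_0 ∪ ⋯ ∪ T_{k-1}) \ T_j`
contains no directed path passing through `k` test-vertices. -/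
theorem stmt8 (k R m L : ℕ) [NeZero k] (s : Fin R) (j : Fin k) :
    ∀ p : List (LGadV k R m L), p.Chain' (lgadAdj k R m L) →
      (∀ v ∈ p, lgadKeep k R m L s j v) →
      (p.countP (fun v => v.isRight)) < k :=
  countP_lt_of_isChain lgadLabel_of_lgadAdj lgadLabel_ne_of_isRight
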